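/- For every integer n≥0 and every δ>0, the function ζ ↦ ∫₀^δ r^{2n}/(r²−ζ) dr, defined for ζ<0, can be written as I_n(ζ) = (π/2)·ζⁿ/√(−ζ) + Ĩ_n(ζ), where Ĩ_n is the restriction to (−ε,0) of a function analytic in a neighborhood of the origin. -/

import Mathlib

open MeasureTheory Real

noncomputable section

/-! For `ζ = -a² < 0`, long division gives
`r^(2n)/(r² - ζ) = ∑_{k<n} r^(2k) ζ^(n-1-k) + ζⁿ/(r² + a²)`, whose integral over `[0, δ]` is a
polynomial in `ζ` plus `ζⁿ arctan(δ/a)/a`. Since `arctan(δ/a) = π/2 - arctan(a/δ)`, the singular part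
is `(π/2) ζⁿ/a`, and `arctan(a/δ)/a = δ⁻¹ ∑ (-a²/δ²)ᵐ/(2m+1)` is a power series in `ζ/δ²`
with bounded coefficients, hence analytic for `|ζ| < δ²`. -/

open FormalMultilinearSeries Finset

def arctanDivSeries : ℝ → ℝ :=
  ofScalarsSum fun m : ℕ => ((2 * m + 1 : ℝ))⁻¹

lemma one_le_radius_arctanDivSeries :
    1 ≤ (ofScalars ℝ fun m : ℕ => ((2 * m + 1 : ℝ))⁻¹).radius := by
  refine le_radius_of_bound _ 1 fun m => ?_
  rw [ofScalars_norm, NNReal.coe_one, one_pow, mul_one, norm_inv]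
  refine inv_le_one_of_one_le₀ ?_
  rw [Real.norm_eq_abs, abs_of_pos (by positivity)]
  linarith [m.cast_nonneg (α := ℝ)]

lemma analyticOnNhd_arctanDivSeries : AnalyticOnNhd ℝ arctanDivSeries (Metric.ball 0 1) := by
  refine (FormalMultilinearSeries.analyticOnNhd (𝕜 := ℝ)
    (p := ofScalars ℝ fun m : ℕ => ((2 * m + 1 : ℝ))⁻¹)).mono ?_
  have h := Metric.eball_subset_eball (x := (0 : ℝ)) one_le_radius_arctanDivSeries
  rwa [← ENNReal.coe_one, Metric.eball_coe, NNReal.coe_one] at h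

lemma arctanDivSeries_neg_sq {x : ℝ} (hx₀ : x ≠ 0) (hx : |x| < 1) :
    arctanDivSeries (-x ^ 2) = arctan x / x := by
  have hsum := (Real.hasSum_arctan (by rwa [Real.norm_eq_abs])).div_const x
  rw [arctanDivSeries, ofScalars_sum_eq, ← hsum.tsum_eq]
  refine tsum_congr fun m => ?_
  rw [smul_eq_mul, neg_pow, ← pow_mul]
  push_cast
  field_simp
  ring

theorem pow_two_mul_div_sq_sub {K : Type*} [Field K] (n : ℕ) {r ζ : K} (h : r ^ 2 - ζ ≠ 0) :
    r ^ (2 * n) / (r ^ 2 - ζ) =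
      ∑ k ∈ range n, (r ^ 2) ^ k * ζ ^ (n - 1 - k) + ζ ^ n / (r ^ 2 - ζ) := by
  rw [← sub_eq_iff_eq_add, ← sub_div, div_eq_iff h, geom_sum₂_mul, pow_mul]

theorem integral_pow_two_mul_div_sq_sub (n : ℕ) (δ : ℝ) {ζ : ℝ} (hζ : ζ < 0) :
    ∫ r in (0 : ℝ)..δ, r ^ (2 * n) / (r ^ 2 - ζ) =
      ∑ k ∈ range n, δ ^ (2 * k + 1) / (2 * k + 1) * ζ ^ (n - 1 - k) +
        ζ ^ n * (arctan (δ / √(-ζ)) / √(-ζ)) := by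
  set a := √(-ζ)
  have ha : 0 < a := Real.sqrt_pos.mpr (neg_pos.mpr hζ)
  have hζa : ζ = -a ^ 2 := by rw [Real.sq_sqrt (neg_nonneg.mpr hζ.le), neg_neg]
  have hsplit : (fun r : ℝ => r ^ (2 * n) / (r ^ 2 - ζ)) = fun r =>
      ∑ k ∈ range n, r ^ (2 * k) * ζ ^ (n - 1 - k) + ζ ^ n * (a ^ 2 + r ^ 2)⁻¹ := by
    funext r
    have hpos : 0 < r ^ 2 - ζ := by nlinarith [sq_nonneg r]
    simp_rw [pow_two_mul_div_sq_sub n hpos.ne', pow_mul, hζa, div_eq_mul_inv, sub_neg_eq_add,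
      add_comm (r ^ 2)]
  have hcont : Continuous fun r : ℝ => (a ^ 2 + r ^ 2)⁻¹ :=
    (continuous_const.add (continuous_pow 2)).inv₀ fun r =>
      (add_pos_of_pos_of_nonneg (pow_pos ha 2) (sq_nonneg r)).ne'
  rw [hsplit, intervalIntegral.integral_add (Continuous.intervalIntegrable (by fun_prop) _ _)
      ((hcont.intervalIntegrable 0 δ).const_mul _),
    intervalIntegral.integral_finsetSum fun k _ =>
      Continuous.intervalIntegrable (by fun_prop) _ _, intervalIntegral.integral_const_mul,
    integral_inv_sq_add_sq ha.ne']
  congr 1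
  · refine sum_congr rfl fun k _ => ?_
    rw [intervalIntegral.integral_mul_const, integral_pow]
    push_cast
    ring
  · simp only [zero_div, arctan_zero, sub_zero]
    ring

/-- The function `Ĩₙ`. -/
def regularPart (n : ℕ) (δ ζ : ℝ) : ℝ :=
  ∑ k ∈ range n, δ ^ (2 * k + 1) / (2 * k + 1) * ζ ^ (n - 1 - k) -
    ζ ^ n * arctanDivSeries (ζ / δ ^ 2) / δ

lemma analyticOnNhd_regularPart (n : ℕ) (δ : ℝ) :
    AnalyticOnNhd ℝ (regularPart n δ) (Metric.ball 0 (δ ^ 2)) := by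
  have hmaps : Set.MapsTo (fun ζ : ℝ => ζ / δ ^ 2) (Metric.ball 0 (δ ^ 2)) (Metric.ball 0 1) := by
    intro ζ hζ
    rw [mem_ball_zero_iff, Real.norm_eq_abs] at hζ ⊢
    rw [abs_div, abs_of_nonneg (sq_nonneg δ), div_lt_one ((abs_nonneg ζ).trans_lt hζ)]
    exact hζ
  have hseries : AnalyticOnNhd ℝ (fun ζ => arctanDivSeries (ζ / δ ^ 2)) (Metric.ball 0 (δ ^ 2)) :=
    analyticOnNhd_arctanDivSeries.comp analyticOnNhd_id.div_const hmaps
  intro ζ hζ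
  have := hseries ζ hζ
  unfold regularPart
  fun_prop

lemma regularPart_of_neg (n : ℕ) {δ ζ : ℝ} (hδ : 0 < δ) (hζ : ζ < 0) (hζδ : -δ ^ 2 < ζ) :
    regularPart n δ ζ = ∑ k ∈ range n, δ ^ (2 * k + 1) / (2 * k + 1) * ζ ^ (n - 1 - k) -
      ζ ^ n * (arctan (√(-ζ) / δ) / √(-ζ)) := by
  have ha : 0 < √(-ζ) := Real.sqrt_pos.mpr (neg_pos.mpr hζ)
  have hx : |√(-ζ) / δ| < 1 := by
    rw [abs_of_pos (div_pos ha hδ), div_lt_one hδ, Real.sqrt_lt' hδ]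
    linarith
  have harg : ζ / δ ^ 2 = -(√(-ζ) / δ) ^ 2 := by
    rw [div_pow, Real.sq_sqrt (neg_nonneg.mpr hζ.le), neg_div, neg_neg]
  rw [regularPart, harg, arctanDivSeries_neg_sq (div_pos ha hδ).ne' hx]
  field_simp

theorem statement1 (n : ℕ) (δ : ℝ) (hδ : 0 < δ) :
    (∀ ζ : ℝ, ζ < 0 →
      IntegrableOn (fun r : ℝ => r ^ (2 * n) / (r ^ 2 - ζ)) (Set.Ioo 0 δ) volume) ∧
    ∃ ε > (0 : ℝ), ∃ g : ℝ → ℝ,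
      AnalyticOnNhd ℝ g (Metric.ball (0 : ℝ) ε) ∧
      ∀ ζ : ℝ, -ε < ζ → ζ < 0 →
        ∫ r in Set.Ioo (0 : ℝ) δ, r ^ (2 * n) / (r ^ 2 - ζ) =
          Real.pi / 2 * ζ ^ n / Real.sqrt (-ζ) + g ζ := by
  refine ⟨fun ζ hζ => ?_, δ ^ 2, by positivity, regularPart n δ, analyticOnNhd_regularPart n δ,
    fun ζ hζδ hζ => ?_⟩
  · have hcont : Continuous fun r : ℝ => r ^ (2 * n) / (r ^ 2 - ζ) :=
      by fun_prop (disch := intro r; nlinarith [sq_nonneg r])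
    exact hcont.integrableOn_Icc.mono_set Set.Ioo_subset_Icc_self
  have ha : 0 < √(-ζ) := Real.sqrt_pos.mpr (neg_pos.mpr hζ)
  have harctan : arctan (δ / √(-ζ)) = π / 2 - arctan (√(-ζ) / δ) := by
    rw [← inv_div, arctan_inv_of_pos (div_pos ha hδ)]
  rw [← integral_Ioc_eq_integral_Ioo, ← intervalIntegral.integral_of_le hδ.le,
    integral_pow_two_mul_div_sq_sub n δ hζ, regularPart_of_neg n hδ hζ hζδ, harctan]
  ring
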